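/- Let (Ω, P) be a probability space and K ≥ 2 an integer number of arms with unique best arm * (maximal mean μ_*). Let c > 0 and n > 0 be reals. Suppose each suboptimal arm i is sampled n_i times with n_i ≥ c√n/Δ_i², where Δ_i = μ_* − μ_i > 0, and the best arm is sampled n_* times with n_* ≥ n_i for all i ≠ *; all samples are jointly independent, take values in [0,1], and each sample of arm i has expectation μ_i. Let X̄_i denote the sample mean of arm i and let J be any random arm index, measurable with respect to the samples, such that X̄_J = max_i X̄_i. Then the simple regret satisfies E[μ_* − μ_J] ≤ 2·Σ_{i ≠ *} Δ_i · exp(−c√n/2). -/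

import Mathlib

/-!
An arm `i ≠ *` can be selected only if `X̄_i ≥ X̄_*`, which forces `X̄_i` above or `X̄_*` below
the midpoint of `[μ_i, μ_*]`. By Hoeffding's inequality each event has probability at most
`exp (-n_i Δ_i² / 2) ≤ exp (-c √n / 2)` (the best arm has at least `n_i` samples), and the
regret is `∑_{i ≠ *} Δ_i P(J = i)`.
-/

open MeasureTheory ProbabilityTheory Real

-- Written as in the hypothesis `hJ` of the theorem, so that `hJ` is literally about `sampleMean`.
noncomputable def sampleMean {Ω : Type*} {m : ℕ} (Y : Fin m → Ω → ℝ) (ω : Ω) : ℝ :=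
  (1 / m : ℝ) * ∑ k, Y k ω

section Hoeffding

variable {Ω : Type*} [MeasurableSpace Ω] {P : Measure Ω} [IsProbabilityMeasure P]
  {m : ℕ} {Y : Fin m → Ω → ℝ} {a b p : ℝ}

lemma measureReal_add_le_sampleMean_le (hindep : iIndepFun Y P)
    (hmeas : ∀ k, Measurable (Y k)) (hab : ∀ k ω, Y k ω ∈ Set.Icc a b)
    (hp : ∀ k, ∫ ω, Y k ω ∂P = p) (hm : 0 < m) {ε : ℝ} (hε : 0 ≤ ε) :
    P.real {ω | p + ε ≤ sampleMean Y ω} ≤ exp (-2 * m * ε ^ 2 / (b - a) ^ 2) := by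
  have hm' : (0 : ℝ) < m := Nat.cast_pos.mpr hm
  have hcentered : iIndepFun (fun k ω => Y k ω - p) P :=
    hindep.comp (fun _ x => x - p) fun _ => measurable_id.sub_const p
  have hsubG : ∀ k ∈ Finset.univ, HasSubgaussianMGF (fun ω => Y k ω - p)
      ((‖b - a‖₊ / 2) ^ 2) P := fun k _ => by
    simpa only [hp k] using hasSubgaussianMGF_of_mem_Icc (hmeas k).aemeasurable
      (ae_of_all P (hab k))
  have hoeffding :=
    HasSubgaussianMGF.measure_sum_ge_le_of_iIndepFun hcentered hsubG (mul_nonneg hm'.le hε)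
  have hsum : ∀ ω, ∑ k, (Y k ω - p) = m * (sampleMean Y ω - p) := fun ω => by
    simp only [sampleMean, Finset.sum_sub_distrib, Finset.sum_const, Finset.card_univ,
      Fintype.card_fin, nsmul_eq_mul]
    field_simp
  calc P.real {ω | p + ε ≤ sampleMean Y ω}
      = P.real {ω | m * ε ≤ ∑ k, (Y k ω - p)} := by
        congr 1; ext ω
        simp only [Set.mem_ofPred_eq, hsum, mul_le_mul_iff_right₀ hm', le_sub_iff_add_le']
    _ ≤ exp (-(m * ε) ^ 2 / (2 * ∑ _k : Fin m, ((‖b - a‖₊ / 2) ^ 2 : NNReal))) := hoeffding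
    _ = exp (-2 * m * ε ^ 2 / (b - a) ^ 2) := by
        congr 1
        simp only [Finset.sum_const, Finset.card_univ, Fintype.card_fin, nsmul_eq_mul]
        push_cast
        rw [Real.norm_eq_abs, div_pow, sq_abs]
        field_simp

lemma measureReal_sampleMean_le_sub_le (hindep : iIndepFun Y P)
    (hmeas : ∀ k, Measurable (Y k)) (hab : ∀ k ω, Y k ω ∈ Set.Icc a b)
    (hp : ∀ k, ∫ ω, Y k ω ∂P = p) (hm : 0 < m) {ε : ℝ} (hε : 0 ≤ ε) :
    P.real {ω | sampleMean Y ω ≤ p - ε} ≤ exp (-2 * m * ε ^ 2 / (b - a) ^ 2) := by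
  have hneg := measureReal_add_le_sampleMean_le (Y := fun k ω => -Y k ω) (a := -b) (b := -a)
    (hindep.comp (fun _ x => -x) fun _ => measurable_neg) (fun k => (hmeas k).neg)
    (fun k ω => by simpa [and_comm] using hab k ω) (fun k => by rw [integral_neg, hp k]) hm hε
  have hmean : ∀ ω, sampleMean (fun k ω => -Y k ω) ω = -sampleMean Y ω := fun ω => by
    simp only [sampleMean, Finset.sum_neg_distrib, mul_neg]
  convert hneg using 3
  · ext ω
    simp only [hmean]
    constructor <;> intro h <;> linarith
  · ring

lemma measureReal_sampleMean_le_sampleMean_le {m' : ℕ} {Z : Fin m' → Ω → ℝ} {q : ℝ}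
    (hY : iIndepFun Y P) (hYmeas : ∀ k, Measurable (Y k)) (hYab : ∀ k ω, Y k ω ∈ Set.Icc a b)
    (hYp : ∀ k, ∫ ω, Y k ω ∂P = p) (hm : 0 < m)
    (hZ : iIndepFun Z P) (hZmeas : ∀ k, Measurable (Z k)) (hZab : ∀ k ω, Z k ω ∈ Set.Icc a b)
    (hZq : ∀ k, ∫ ω, Z k ω ∂P = q) (hm' : 0 < m') (hpq : p ≤ q) :
    P.real {ω | sampleMean Z ω ≤ sampleMean Y ω}
      ≤ exp (-m * (q - p) ^ 2 / (2 * (b - a) ^ 2))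
        + exp (-m' * (q - p) ^ 2 / (2 * (b - a) ^ 2)) := by
  have hε : 0 ≤ (q - p) / 2 := by linarith
  -- Both sample means cannot lie on the wrong side of the midpoint `(p + q) / 2`.
  have hsplit : {ω | sampleMean Z ω ≤ sampleMean Y ω}
      ⊆ {ω | p + (q - p) / 2 ≤ sampleMean Y ω} ∪ {ω | sampleMean Z ω ≤ q - (q - p) / 2} := by
    intro ω hω
    by_contra hnot
    simp only [Set.mem_union, Set.mem_ofPred_eq, not_or, not_le] at hω hnot
    linarith
  calc P.real {ω | sampleMean Z ω ≤ sampleMean Y ω}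
      ≤ P.real {ω | p + (q - p) / 2 ≤ sampleMean Y ω}
        + P.real {ω | sampleMean Z ω ≤ q - (q - p) / 2} :=
        (measureReal_mono hsplit).trans (measureReal_union_le _ _)
    _ ≤ exp (-2 * m * ((q - p) / 2) ^ 2 / (b - a) ^ 2)
        + exp (-2 * m' * ((q - p) / 2) ^ 2 / (b - a) ^ 2) :=
        add_le_add (measureReal_add_le_sampleMean_le hY hYmeas hYab hYp hm hε)
          (measureReal_sampleMean_le_sub_le hZ hZmeas hZab hZq hm' hε)
    _ = _ := by generalize (b - a) ^ 2 = s; congr 2 <;> ring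

end Hoeffding

lemma integral_comp_eq_sum_measureReal_preimage {Ω ι : Type*} [MeasurableSpace Ω]
    {P : Measure Ω} [IsFiniteMeasure P] [Fintype ι] [MeasurableSpace ι]
    [MeasurableSingletonClass ι] {J : Ω → ι} (hJ : Measurable J) (f : ι → ℝ) :
    ∫ ω, f (J ω) ∂P = ∑ i, P.real (J ⁻¹' {i}) * f i := by
  rw [← integral_map hJ.aemeasurable (measurable_of_finite f).aestronglyMeasurable,
    integral_fintype (.of_finite)]
  simp only [map_measureReal_apply hJ (measurableSet_singleton _), smul_eq_mul]

lemma exp_neg_mul_sq_div_two_le {x Δ m : ℝ} (hΔ : 0 < Δ) (h : x / Δ ^ 2 ≤ m) :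
    exp (-m * Δ ^ 2 / 2) ≤ exp (-x / 2) := by
  have hx := (div_le_iff₀ (pow_pos hΔ 2)).mp h
  rw [exp_le_exp]
  linarith

theorem simple_regret_ucb_sqrt_bound_general
    {Ω : Type*} [MeasurableSpace Ω] (P : Measure Ω) [IsProbabilityMeasure P]
    (K : ℕ)
    (c : ℝ) (n : ℝ)
    (nsamp : Fin K → ℕ) (hnsamp : ∀ i, 0 < nsamp i)
    (X : (i : Fin K) → Fin (nsamp i) → Ω → ℝ)
    (hmX : ∀ i k, Measurable (X i k))
    (hindep : iIndepFun
      (fun p : Σ i : Fin K, Fin (nsamp i) => X p.1 p.2) P)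
    (hX01 : ∀ i k ω, X i k ω ∈ Set.Icc (0 : ℝ) 1)
    (μ : Fin K → ℝ)
    (hEX : ∀ i k, ∫ ω, X i k ω ∂P = μ i)
    (star : Fin K) (hstar : ∀ i, i ≠ star → μ i < μ star)
    (hni : ∀ i, i ≠ star →
      (nsamp i : ℝ) ≥ c * Real.sqrt n / (μ star - μ i) ^ 2)
    (hnstar : ∀ i, i ≠ star → nsamp i ≤ nsamp star)
    (J : Ω → Fin K) (hJmeas : Measurable J)
    (hJ : ∀ ω i, (1 / (nsamp i) : ℝ) * ∑ k, X i k ω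
        ≤ (1 / (nsamp (J ω)) : ℝ) * ∑ k, X (J ω) k ω) :
    ∫ ω, (μ star - μ (J ω)) ∂P
      ≤ 2 * ∑ i ∈ Finset.univ.filter (· ≠ star),
          (μ star - μ i) * Real.exp (-c * Real.sqrt n / 2) := by
  have hsamples : ∀ i, iIndepFun (X i) P := fun i =>
    hindep.precomp (g := Sigma.mk i) sigma_mk_injective
  have hmisidentify : ∀ i ≠ star, P.real (J ⁻¹' {i}) ≤ 2 * exp (-c * √n / 2) := by
    intro i hi
    have hΔ : 0 < μ star - μ i := sub_pos.mpr (hstar i hi)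
    have hnstar' : c * √n / (μ star - μ i) ^ 2 ≤ nsamp star :=
      (hni i hi).trans (Nat.cast_le.mpr (hnstar i hi))
    calc P.real (J ⁻¹' {i})
        ≤ P.real {ω | sampleMean (X star) ω ≤ sampleMean (X i) ω} :=
          measureReal_mono fun ω (hω : J ω = i) => hω ▸ hJ ω star
      _ ≤ exp (-nsamp i * (μ star - μ i) ^ 2 / (2 * (1 - 0) ^ 2))
          + exp (-nsamp star * (μ star - μ i) ^ 2 / (2 * (1 - 0) ^ 2)) :=
          measureReal_sampleMean_le_sampleMean_le (hsamples i) (hmX i) (hX01 i) (hEX i)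
            (hnsamp i) (hsamples star) (hmX star) (hX01 star) (hEX star) (hnsamp star)
            (hstar i hi).le
      _ ≤ exp (-(c * √n) / 2) + exp (-(c * √n) / 2) := by
          simp only [sub_zero, one_pow, mul_one]
          exact add_le_add (exp_neg_mul_sq_div_two_le hΔ (hni i hi))
            (exp_neg_mul_sq_div_two_le hΔ hnstar')
      _ = 2 * exp (-c * √n / 2) := by rw [neg_mul]; ring
  rw [integral_comp_eq_sum_measureReal_preimage hJmeas (fun j => μ star - μ j), Finset.mul_sum,
    ← Finset.sum_filter_of_ne (p := (· ≠ star)) fun i _ h hi => h (by rw [hi, sub_self, mul_zero])]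
  refine Finset.sum_le_sum fun i hmem => ?_
  have hi : i ≠ star := (Finset.mem_filter.mp hmem).2
  calc P.real (J ⁻¹' {i}) * (μ star - μ i)
      ≤ 2 * exp (-c * √n / 2) * (μ star - μ i) :=
        mul_le_mul_of_nonneg_right (hmisidentify i hi) (sub_pos.mpr (hstar i hi)).le
    _ = 2 * ((μ star - μ i) * exp (-c * √n / 2)) := by ring

/-- Fixed-allocation form of the simple-regret bound for the UCB√· sampling
scheme (Theorem 2 of the paper): if each suboptimal arm `i` receives at least
`c √n / Δ_i²` samples and the best arm at least as many samples as any other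
arm, then the expected simple regret of selecting an arm with the greatest
sample mean is at most `2 ∑_{i ≠ *} Δ_i exp (-c √n / 2)`. -/
theorem simple_regret_ucb_sqrt_bound
    {Ω : Type*} [MeasurableSpace Ω] (P : Measure Ω) [IsProbabilityMeasure P]
    (K : ℕ) (hK : 2 ≤ K)
    (c : ℝ) (hc : 0 < c) (n : ℝ) (hn : 0 < n)
    (nsamp : Fin K → ℕ) (hnsamp : ∀ i, 0 < nsamp i)
    (X : (i : Fin K) → Fin (nsamp i) → Ω → ℝ)
    (hmX : ∀ i k, Measurable (X i k))
    (hindep : iIndepFun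
      (fun p : Σ i : Fin K, Fin (nsamp i) => X p.1 p.2) P)
    (hX01 : ∀ i k ω, X i k ω ∈ Set.Icc (0 : ℝ) 1)
    (μ : Fin K → ℝ)
    (hEX : ∀ i k, ∫ ω, X i k ω ∂P = μ i)
    (star : Fin K) (hstar : ∀ i, i ≠ star → μ i < μ star)
    (hni : ∀ i, i ≠ star →
      (nsamp i : ℝ) ≥ c * Real.sqrt n / (μ star - μ i) ^ 2)
    (hnstar : ∀ i, i ≠ star → nsamp i ≤ nsamp star)
    (J : Ω → Fin K) (hJmeas : Measurable J)
    (hJ : ∀ ω i, (1 / (nsamp i) : ℝ) * ∑ k, X i k ω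
        ≤ (1 / (nsamp (J ω)) : ℝ) * ∑ k, X (J ω) k ω) :
    ∫ ω, (μ star - μ (J ω)) ∂P
      ≤ 2 * ∑ i ∈ Finset.univ.filter (· ≠ star),
          (μ star - μ i) * Real.exp (-c * Real.sqrt n / 2) :=
  simple_regret_ucb_sqrt_bound_general P K c n nsamp hnsamp X hmX hindep hX01 μ hEX star hstar hni
    hnstar J hJmeas hJ
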